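/- Let A = [A_{ij}] be an n×n operator matrix with entries A_{ij} ∈ B(H), and let f, g : [0,∞) → [0,∞) be continuous with f(λ)g(λ) = λ for all λ ≥ 0. Then w(A) ≤ w(Â), where Â is the upper-triangular n×n complex matrix with diagonal entries w(A_{ii}) and, for i < j, entries ‖f²(|A_{ij}|) + g²(|A_{ji}*|)‖^{1/2} · ‖f²(|A_{ji}|) + g²(|A_{ij}*|)‖^{1/2}. -/

import Mathlib

/-- The numerical radius of a bounded linear operator on a complex Hilbert space:
`w(T) = sup {|⟨Tx, x⟩| : ‖x‖ = 1}`. -/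
noncomputable def numRad {H : Type*} [NormedAddCommGroup H] [InnerProductSpace ℂ H]
    (T : H →L[ℂ] H) : ℝ :=
  sSup {r : ℝ | ∃ x : H, ‖x‖ = 1 ∧ r = ‖(inner ℂ (T x) x : ℂ)‖}

/-- The absolute value `|T| = (T*T)^{1/2}` of a bounded operator. -/
noncomputable def absOp {H : Type*} [NormedAddCommGroup H] [InnerProductSpace ℂ H]
    [CompleteSpace H] (T : H →L[ℂ] H) : H →L[ℂ] H :=
  CFC.sqrt (ContinuousLinearMap.adjoint T * T)

/-- The numerical radius of a complex `n × n` matrix. -/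
noncomputable def numRadMat {n : ℕ} (M : Matrix (Fin n) (Fin n) ℂ) : ℝ :=
  numRad (Matrix.toEuclideanCLM (𝕜 := ℂ) M)

/-!
For a unit vector `x = (x_i)`, `|⟨Tx, x⟩| ≤ ∑_{i,j} |⟨A_ij x_j, x_i⟩|`. The diagonal terms are at
most `w(A_ii) ‖x_i‖²`. For `i < j`, the mixed Schwarz inequality
`|⟨Su, v⟩| ≤ ‖f(|S|) u‖ ‖g(|S*|) v‖` applied to `A_ij` and `A_ji`, followed by Cauchy–Schwarz in
`ℝ²`, bounds the two terms `(i, j)` and `(j, i)` together by `Â_ij ‖x_i‖ ‖x_j‖`. The sum is then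
`Re ⟨Â y, y⟩` for the unit vector `y = (‖x_i‖)`, which is at most `w(Â)`.

The mixed Schwarz inequality is proved without a polar decomposition: for `ε > 0`,
`⟨Su, v⟩ = ⟨(g(|S*|) + ε)⁻¹ S u, (g(|S*|) + ε) v⟩`, the intertwining relation
`S* h(|S*|) = h(|S|) S*` shows that the first vector has norm at most `‖f(|S|) u‖`, and `ε → 0`.
-/

open scoped NNReal InnerProductSpace

theorem mul_add_mul_le_sqrt_mul_sqrt (a b c d : ℝ) :
    a * c + b * d ≤ √(a ^ 2 + b ^ 2) * √(c ^ 2 + d ^ 2) := by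
  simpa [Fin.sum_univ_two] using Real.sum_mul_le_sqrt_mul_sqrt Finset.univ ![a, b] ![c, d]

section Intertwining

variable {A : Type*} [CStarAlgebra A]

theorem mul_cfc_eq_cfc_mul_of_mul_eq {a b c : A} (hb : IsSelfAdjoint b) (hc : IsSelfAdjoint c)
    (habc : a * b = c * a) {f : ℝ → ℝ} (hf : Continuous f) : a * cfc f b = cfc f c * a := by
  set s := spectrum ℝ b ∪ spectrum ℝ c
  have : CompactSpace s :=
    isCompact_iff_compactSpace.mp ((spectrum.isCompact b).union (spectrum.isCompact c))
  let ιb : C(spectrum ℝ b, s) := ⟨Set.inclusion Set.subset_union_left, continuous_inclusion _⟩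
  let ιc : C(spectrum ℝ c, s) := ⟨Set.inclusion Set.subset_union_right, continuous_inclusion _⟩
  let Φb : C(s, ℝ) → A := fun k => a * cfcHom hb (k.comp ιb)
  let Φc : C(s, ℝ) → A := fun k => cfcHom hc (k.comp ιc) * a
  -- Stone–Weierstrass: both sides are continuous in `k` and agree on polynomials.
  have key (k : C(s, ℝ)) : Φb k = Φc k := by
    induction k using ContinuousMap.induction_on_of_compact with
    | const r =>
      change a * cfcHom hb (algebraMap ℝ _ r) = cfcHom hc (algebraMap ℝ _ r) * a
      rw [AlgHomClass.commutes, AlgHomClass.commutes, Algebra.commutes]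
    | id | star_id =>
      change a * cfcHom hb (.restrict _ (.id ℝ)) = cfcHom hc (.restrict _ (.id ℝ)) * a
      rwa [cfcHom_id, cfcHom_id]
    | add p q hp hq =>
      simp only [Φb, Φc, ContinuousMap.add_comp, map_add, mul_add, add_mul] at *
      rw [hp, hq]
    | mul p q hp hq =>
      simp only [Φb, Φc, ContinuousMap.mul_comp, map_mul] at *
      rw [← mul_assoc, hp, mul_assoc, hq, mul_assoc]
    | frequently k hk =>
      exact (isClosed_eq (by fun_prop) (by fun_prop)).closure_subset
        (mem_closure_iff_frequently.mpr hk)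
  rw [cfc_apply f b, cfc_apply f c]
  exact key ⟨fun t => f t, hf.comp continuous_subtype_val⟩

variable [PartialOrder A] [StarOrderedRing A]

theorem cfc_abs_eq_cfc_star_mul_self (a : A) {f : ℝ≥0 → ℝ≥0} (hf : Continuous f) :
    cfc f (CFC.abs a) = cfc (fun t : ℝ => (f (NNReal.sqrt t.toNNReal) : ℝ)) (star a * a) := by
  rw [show CFC.abs a = CFC.sqrt (star a * a) from rfl, CFC.sqrt_eq_cfc,
    ← cfc_comp' f NNReal.sqrt (star a * a), cfc_nnreal_eq_real _ (star a * a)]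

theorem mul_cfc_abs (a : A) {f : ℝ≥0 → ℝ≥0} (hf : Continuous f) :
    a * cfc f (CFC.abs a) = cfc f (CFC.abs (star a)) * a := by
  rw [cfc_abs_eq_cfc_star_mul_self a hf, cfc_abs_eq_cfc_star_mul_self _ hf, star_star]
  exact mul_cfc_eq_cfc_mul_of_mul_eq (.star_mul_self a) (.mul_star_self a)
    (by simp only [mul_assoc]) (by fun_prop)

end Intertwining

section NumericalRadius

variable {H : Type*} [NormedAddCommGroup H] [InnerProductSpace ℂ H]

theorem norm_inner_apply_self_le (T : H →L[ℂ] H) (x : H) :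
    ‖⟪T x, x⟫_ℂ‖ ≤ ‖T‖ * ‖x‖ ^ 2 :=
  calc ‖⟪T x, x⟫_ℂ‖ ≤ ‖T x‖ * ‖x‖ := norm_inner_le_norm _ _
    _ ≤ ‖T‖ * ‖x‖ * ‖x‖ := by gcongr; exact T.le_opNorm x
    _ = ‖T‖ * ‖x‖ ^ 2 := by ring

theorem numRad_nonneg (T : H →L[ℂ] H) : 0 ≤ numRad T :=
  Real.sSup_nonneg (by rintro r ⟨x, -, rfl⟩; positivity)

theorem numRad_le {T : H →L[ℂ] H} {c : ℝ} (hc : 0 ≤ c)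
    (h : ∀ x : H, ‖x‖ = 1 → ‖⟪T x, x⟫_ℂ‖ ≤ c) : numRad T ≤ c :=
  Real.sSup_le (by rintro r ⟨x, hx, rfl⟩; exact h x hx) hc

theorem norm_inner_le_numRad {T : H →L[ℂ] H} {x : H} (hx : ‖x‖ = 1) :
    ‖⟪T x, x⟫_ℂ‖ ≤ numRad T := by
  refine le_csSup ⟨‖T‖, ?_⟩ ⟨x, hx, rfl⟩
  rintro r ⟨y, hy, rfl⟩
  simpa [hy] using norm_inner_apply_self_le T y

theorem norm_inner_le_numRad_mul_sq (T : H →L[ℂ] H) (x : H) :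
    ‖⟪T x, x⟫_ℂ‖ ≤ numRad T * ‖x‖ ^ 2 := by
  obtain rfl | hx := eq_or_ne x 0
  · simp
  have hu := norm_inner_le_numRad (T := T) (norm_smul_inv_norm (𝕜 := ℂ) hx)
  rw [map_smul, inner_smul_left, inner_smul_right, norm_mul, norm_mul] at hu
  simp only [RCLike.norm_conj, norm_inv, RCLike.norm_ofReal, abs_norm] at hu
  rw [← div_le_iff₀ (by positivity), div_eq_mul_inv, sq, mul_inv]
  linarith

end NumericalRadius

section MixedSchwarz

open ContinuousLinearMap

variable {H : Type*} [NormedAddCommGroup H] [InnerProductSpace ℂ H] [CompleteSpace H]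

theorem norm_apply_le_of_star_mul_self_le {W V : H →L[ℂ] H} (h : star W * W ≤ star V * V)
    (x : H) : ‖W x‖ ≤ ‖V x‖ := by
  have hsq (U : H →L[ℂ] H) : ‖U x‖ ^ 2 = RCLike.re ⟪(star U * U) x, x⟫_ℂ :=
    U.apply_norm_sq_eq_inner_adjoint_left x
  have := ((le_def _ _).mp h).re_inner_nonneg_left x
  rw [sub_apply, inner_sub_left, map_sub, sub_nonneg, ← hsq, ← hsq] at this
  exact (sq_le_sq₀ (norm_nonneg _) (norm_nonneg _)).mp this

theorem norm_cfc_abs_star_apply_le (S : H →L[ℂ] H) {f h : ℝ≥0 → ℝ≥0} (hf : Continuous f)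
    (hh : Continuous h) (hhf : ∀ t, h t * t ≤ f t) (x : H) :
    ‖cfc h (CFC.abs (star S)) (S x)‖ ≤ ‖cfc f (CFC.abs S) x‖ := by
  refine norm_apply_le_of_star_mul_self_le (W := cfc h (CFC.abs (star S)) * S) ?_ x
  have hQ : IsSelfAdjoint (cfc h (CFC.abs (star S))) := .of_nonneg (cfc_predicate _ _)
  have hF : IsSelfAdjoint (cfc f (CFC.abs S)) := .of_nonneg (cfc_predicate _ _)
  calc star (cfc h (CFC.abs (star S)) * S) * (cfc h (CFC.abs (star S)) * S)
      = star S * cfc (fun t => h t * h t) (CFC.abs (star S)) * S := by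
        rw [star_mul, hQ.star_eq, cfc_mul h h, mul_assoc, mul_assoc, mul_assoc]
    _ = cfc (fun t => h t * h t) (CFC.abs S) * (CFC.abs S * CFC.abs S) := by
        rw [mul_cfc_abs _ (by fun_prop), star_star, mul_assoc, CFC.abs_mul_abs]
    _ = cfc (fun t => h t * h t * (t * t)) (CFC.abs S) := by
        rw [cfc_mul (fun t => h t * h t) (fun t => t * t), cfc_mul (fun t => t) (fun t => t),
          cfc_id' ℝ≥0 (CFC.abs S)]
    _ ≤ cfc (fun t => f t * f t) (CFC.abs S) :=
        cfc_mono fun t _ => (mul_mul_mul_comm _ _ _ _).trans_le (mul_le_mul' (hhf t) (hhf t))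
    _ = star (cfc f (CFC.abs S)) * cfc f (CFC.abs S) := by rw [hF.star_eq, cfc_mul f f]

theorem norm_inner_le_norm_cfc_abs_mul_add (S : H →L[ℂ] H) {f g : ℝ≥0 → ℝ≥0}
    (hf : Continuous f) (hg : Continuous g) (hfg : ∀ t, f t * g t = t) {ε : ℝ≥0} (hε : 0 < ε)
    (x y : H) :
    ‖⟪S x, y⟫_ℂ‖ ≤ ‖cfc f (CFC.abs S) x‖ * (‖cfc g (CFC.abs (star S)) y‖ + ε * ‖y‖) := by
  set b := CFC.abs (star S)
  have hpos (t : ℝ≥0) : 0 < g t + ε := by positivity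
  have hinv : Continuous fun t => (g t + ε)⁻¹ :=
    (hg.add continuous_const).inv₀ fun t => (hpos t).ne'
  have hQR : cfc (fun t => (g t + ε)⁻¹) b * cfc (fun t => g t + ε) b = 1 := by
    rw [← cfc_mul _ _ b, ← cfc_const_one ℝ≥0 b]
    exact cfc_congr fun t _ => inv_mul_cancel₀ (hpos t).ne'
  have hQ : IsSelfAdjoint (cfc (fun t => (g t + ε)⁻¹) b) := .of_nonneg (cfc_predicate _ _)
  have hQS : ‖cfc (fun t => (g t + ε)⁻¹) b (S x)‖ ≤ ‖cfc f (CFC.abs S) x‖ := by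
    refine norm_cfc_abs_star_apply_le S hf hinv (fun t => ?_) x
    rw [inv_mul_le_iff₀ (hpos t), mul_comm]
    calc t = f t * g t := (hfg t).symm
      _ ≤ f t * (g t + ε) := by gcongr; exact le_self_add
  have hR : ‖cfc (fun t => g t + ε) b y‖ ≤ ‖cfc g b y‖ + ε * ‖y‖ := by
    rw [cfc_add_const ε g b, add_apply]
    refine (norm_add_le _ _).trans_eq ?_
    simp [Algebra.algebraMap_eq_smul_one, NNReal.smul_def, norm_smul]
  calc ‖⟪S x, y⟫_ℂ‖
      = ‖⟪cfc (fun t => (g t + ε)⁻¹) b (S x), cfc (fun t => g t + ε) b y⟫_ℂ‖ := by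
        rw [← adjoint_inner_right (cfc (fun t => (g t + ε)⁻¹) b), hQ.adjoint_eq,
          ← mul_apply_eq_comp, hQR, one_apply_eq_self]
    _ ≤ _ := norm_inner_le_norm _ _
    _ ≤ _ := mul_le_mul hQS hR (norm_nonneg _) (norm_nonneg _)

theorem norm_inner_le_norm_cfc_abs_mul (S : H →L[ℂ] H) {f g : ℝ≥0 → ℝ≥0} (hf : Continuous f)
    (hg : Continuous g) (hfg : ∀ t, f t * g t = t) (x y : H) :
    ‖⟪S x, y⟫_ℂ‖ ≤ ‖cfc f (CFC.abs S) x‖ * ‖cfc g (CFC.abs (star S)) y‖ := by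
  have hcont : Continuous
      fun ε : ℝ≥0 => ‖cfc f (CFC.abs S) x‖ * (‖cfc g (CFC.abs (star S)) y‖ + ε * ‖y‖) := by
    fun_prop
  have hlim := tendsto_nhdsWithin_of_tendsto_nhds (s := Set.Ioi 0) (hcont.tendsto 0)
  simp only [NNReal.coe_zero, zero_mul, add_zero] at hlim
  exact ge_of_tendsto hlim (eventually_nhdsWithin_of_forall fun ε hε =>
    norm_inner_le_norm_cfc_abs_mul_add S hf hg hfg hε x y)

theorem sqrt_norm_sq_add_norm_sq_le {P Q : H →L[ℂ] H} (hP : IsSelfAdjoint P)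
    (hQ : IsSelfAdjoint Q) (x : H) : √(‖P x‖ ^ 2 + ‖Q x‖ ^ 2) ≤ √‖P ^ 2 + Q ^ 2‖ * ‖x‖ := by
  have hsq {U : H →L[ℂ] H} (hU : IsSelfAdjoint U) : ‖U x‖ ^ 2 = RCLike.re ⟪(U ^ 2) x, x⟫_ℂ := by
    rw [U.apply_norm_sq_eq_inner_adjoint_left x, hU.adjoint_eq, sq]; rfl
  rw [← Real.sqrt_sq (norm_nonneg x), ← Real.sqrt_mul (norm_nonneg _)]
  refine Real.sqrt_le_sqrt ?_
  rw [hsq hP, hsq hQ, ← map_add, ← inner_add_left, ← add_apply]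
  exact (RCLike.re_le_norm _).trans (norm_inner_apply_self_le _ x)

theorem norm_inner_add_norm_inner_le (S₁ S₂ : H →L[ℂ] H) {f g : ℝ≥0 → ℝ≥0} (hf : Continuous f)
    (hg : Continuous g) (hfg : ∀ t, f t * g t = t) (u v : H) :
    ‖⟪S₁ u, v⟫_ℂ‖ + ‖⟪S₂ v, u⟫_ℂ‖ ≤
      √‖cfc f (CFC.abs S₁) ^ 2 + cfc g (CFC.abs (star S₂)) ^ 2‖ *
        √‖cfc f (CFC.abs S₂) ^ 2 + cfc g (CFC.abs (star S₁)) ^ 2‖ * (‖u‖ * ‖v‖) := by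
  have hsa {k : ℝ≥0 → ℝ≥0} {a : H →L[ℂ] H} : IsSelfAdjoint (cfc k a) :=
    .of_nonneg (cfc_predicate _ _)
  calc ‖⟪S₁ u, v⟫_ℂ‖ + ‖⟪S₂ v, u⟫_ℂ‖
      ≤ ‖cfc f (CFC.abs S₁) u‖ * ‖cfc g (CFC.abs (star S₁)) v‖ +
          ‖cfc g (CFC.abs (star S₂)) u‖ * ‖cfc f (CFC.abs S₂) v‖ :=
        add_le_add (norm_inner_le_norm_cfc_abs_mul S₁ hf hg hfg u v)
          ((norm_inner_le_norm_cfc_abs_mul S₂ hf hg hfg v u).trans_eq (mul_comm _ _))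
    _ ≤ √(‖cfc f (CFC.abs S₁) u‖ ^ 2 + ‖cfc g (CFC.abs (star S₂)) u‖ ^ 2) *
          √(‖cfc f (CFC.abs S₂) v‖ ^ 2 + ‖cfc g (CFC.abs (star S₁)) v‖ ^ 2) := by
        rw [add_comm (‖cfc f (CFC.abs S₂) v‖ ^ 2)]
        exact mul_add_mul_le_sqrt_mul_sqrt _ _ _ _
    _ ≤ √‖cfc f (CFC.abs S₁) ^ 2 + cfc g (CFC.abs (star S₂)) ^ 2‖ * ‖u‖ *
          (√‖cfc f (CFC.abs S₂) ^ 2 + cfc g (CFC.abs (star S₁)) ^ 2‖ * ‖v‖) := by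
        gcongr
        exacts [sqrt_norm_sq_add_norm_sq_le hsa hsa u, sqrt_norm_sq_add_norm_sq_le hsa hsa v]
    _ = _ := by ring

end MixedSchwarz

theorem Finset.sum_sum_le_of_add_swap_le {ι α : Type*} [Fintype ι] [AddCommMonoid α]
    [LinearOrder α] [IsOrderedCancelAddMonoid α] {a b : ι → ι → α}
    (h : ∀ i j, a i j + a j i ≤ b i j + b j i) : ∑ i, ∑ j, a i j ≤ ∑ i, ∑ j, b i j := by
  have hswap (c : ι → ι → α) : 2 • ∑ i, ∑ j, c i j = ∑ i, ∑ j, (c i j + c j i) := by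
    simp only [two_nsmul, Finset.sum_add_distrib]
    rw [Finset.sum_comm (f := fun i j => c j i)]
  rw [← nsmul_le_nsmul_iff_right two_ne_zero, hswap, hswap]
  exact Finset.sum_le_sum fun i _ => Finset.sum_le_sum fun j _ => h i j

theorem inner_apply_self_eq_sum {ι H : Type*} [Fintype ι] [NormedAddCommGroup H]
    [InnerProductSpace ℂ H] {A : ι → ι → H →L[ℂ] H}
    {T : PiLp 2 (fun _ : ι => H) →L[ℂ] PiLp 2 (fun _ : ι => H)}
    (hT : ∀ x i, T x i = ∑ j, A i j (x j)) (x : PiLp 2 (fun _ : ι => H)) :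
    ⟪T x, x⟫_ℂ = ∑ i, ∑ j, ⟪A i j (x j), x i⟫_ℂ := by
  simp only [PiLp.inner_apply, hT, sum_inner]

theorem re_sum_mul_le_numRadMat {n : ℕ} (M : Matrix (Fin n) (Fin n) ℂ) {y : Fin n → ℝ}
    (hy : ∑ i, y i ^ 2 = 1) : ∑ i, ∑ j, (M i j).re * y i * y j ≤ numRadMat M := by
  set Y : EuclideanSpace ℂ (Fin n) := WithLp.toLp 2 fun i => (y i : ℂ)
  have hY : ‖Y‖ = 1 := by
    simp [Y, EuclideanSpace.norm_eq, hy]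
  have hre : RCLike.re ⟪Matrix.toEuclideanCLM (𝕜 := ℂ) M Y, Y⟫_ℂ =
      ∑ i, ∑ j, (M i j).re * y i * y j := by
    simp [Y, PiLp.inner_apply, Matrix.mulVec, dotProduct, Finset.mul_sum, mul_left_comm, mul_comm]
  exact hre ▸ (RCLike.re_le_norm _).trans (norm_inner_le_numRad hY)

theorem absOp_eq_cfcAbs {H : Type*} [NormedAddCommGroup H] [InnerProductSpace ℂ H]
    [CompleteSpace H] (T : H →L[ℂ] H) : absOp T = CFC.abs T :=
  rfl

open ContinuousLinearMap
theorem stmt6 {H : Type*} [NormedAddCommGroup H] [InnerProductSpace ℂ H] [CompleteSpace H]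
    {n : ℕ} (A : Fin n → Fin n → (H →L[ℂ] H))
    (f g : NNReal → NNReal) (hf : Continuous f) (hg : Continuous g)
    (hfg : ∀ lam : NNReal, f lam * g lam = lam)
    (T : PiLp 2 (fun _ : Fin n => H) →L[ℂ] PiLp 2 (fun _ : Fin n => H))
    (hT : ∀ x : PiLp 2 (fun _ : Fin n => H), ∀ i, T x i = ∑ j, A i j (x j))
    (Ahat : Matrix (Fin n) (Fin n) ℂ)
    (hAhat : ∀ i j, Ahat i j =
      if i = j then (numRad (A i i) : ℂ)
      else if i < j then
        ((Real.sqrt ‖cfc f (absOp (A i j)) ^ 2 + cfc g (absOp (adjoint (A j i))) ^ 2‖ *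
          Real.sqrt ‖cfc f (absOp (A j i)) ^ 2 + cfc g (absOp (adjoint (A i j))) ^ 2‖ : ℝ) : ℂ)
      else 0) :
    numRad T ≤ numRadMat Ahat := by
  refine numRad_le (numRad_nonneg _) fun x hx => ?_
  have hy : ∑ i, ‖x i‖ ^ 2 = 1 := by simpa [hx] using (PiLp.norm_sq_eq_of_L2 _ x).symm
  have hpair (i j : Fin n) (hij : i ≤ j) :
      ‖⟪A i j (x j), x i⟫_ℂ‖ + ‖⟪A j i (x i), x j⟫_ℂ‖ ≤
        (Ahat i j).re * ‖x i‖ * ‖x j‖ + (Ahat j i).re * ‖x j‖ * ‖x i‖ := by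
    obtain rfl | hij := hij.eq_or_lt
    · have := norm_inner_le_numRad_mul_sq (A i i) (x i)
      rw [hAhat, if_pos rfl, Complex.ofReal_re]
      linarith
    · have hji : Ahat j i = 0 := by rw [hAhat, if_neg hij.ne', if_neg hij.not_gt]
      simp only [hAhat i j, if_neg hij.ne, if_pos hij, hji, Complex.ofReal_re, Complex.zero_re,
        zero_mul, add_zero, absOp_eq_cfcAbs, ← star_eq_adjoint]
      exact (norm_inner_add_norm_inner_le _ _ hf hg hfg _ _).trans_eq (by ring)
  calc ‖⟪T x, x⟫_ℂ‖ ≤ ∑ i, ∑ j, ‖⟪A i j (x j), x i⟫_ℂ‖ := by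
        rw [inner_apply_self_eq_sum hT]
        exact (norm_sum_le _ _).trans (Finset.sum_le_sum fun i _ => norm_sum_le _ _)
    _ ≤ ∑ i, ∑ j, (Ahat i j).re * ‖x i‖ * ‖x j‖ :=
        Finset.sum_sum_le_of_add_swap_le fun i j => (le_total i j).elim (hpair i j)
          fun hji => by simpa only [add_comm] using hpair j i hji
    _ ≤ numRadMat Ahat := re_sum_mul_le_numRadMat Ahat hy
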